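/- arXiv:2601.16947 — 3 statements merged into one kernel-verified Lean document; each statement's English description precedes it below -/
import Mathlib

section
/- Let I, J be intervals in a poset P and let f : C(I) → C(J) be a morphism of P-modules. Then the family of components f = {f_p}_{p∈P} is consistent: f_p = f_q whenever p and q lie in the same poset-connected component of I ∩ J, and f_p = 0 for every p ∉ I ∩ J. -/
open CategoryTheory
open scoped Classical ENNReal NNReal

set_option linter.unusedSectionVars false
set_option linter.unusedVariables false

/-! ## Posets, intervals, flows -/

variable {P : Type} [PartialOrder P]

/-- A subset of a poset is poset-convex if it contains every point between two of its points. -/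
def PosetConvex (I : Set P) : Prop :=
  ∀ ⦃p q r : P⦄, p ∈ I → q ∈ I → p ≤ r → r ≤ q → r ∈ I

/-- A subset of a poset is poset-connected if any two of its points are joined by a
zigzag path inside the subset. -/
def PosetConnected (I : Set P) : Prop :=
  ∀ p ∈ I, ∀ q ∈ I,
    Relation.ReflTransGen (fun a b => b ∈ I ∧ (a ≤ b ∨ b ≤ a)) p q

/-- An interval in a poset is a poset-convex and poset-connected subset. -/
def IsInterval (I : Set P) : Prop := PosetConvex I ∧ PosetConnected I

/-- `Q` is a poset-connected component of `U`: a poset-connected subset of `U`, maximal with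
respect to inclusion among poset-connected subsets of `U`. -/
def IsPosetComponent (U Q : Set P) : Prop :=
  Q ⊆ U ∧ PosetConnected Q ∧
    ∀ Q' : Set P, Q' ⊆ U → PosetConnected Q' → Q ⊆ Q' → Q' = Q

/-- A subset `Q` of `I ∩ J` is `(I,J)`-valid. -/
def IsValid (I J Q : Set P) : Prop :=
  ∀ p ∈ Q, (∀ q ∈ I, q ≤ p → q ∈ J) ∧ (∀ r ∈ J, p ≤ r → r ∈ I)

/-- An `ℝ`-flow on a poset. -/
structure RFlow (P : Type) [PartialOrder P] where
  Ω : ℝ → P → P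
  mono : ∀ t : ℝ, Monotone (Ω t)
  mono_param : ∀ {t s : ℝ}, t ≤ s → ∀ p : P, Ω t p ≤ Ω s p
  add : ∀ t s : ℝ, ∀ p : P, Ω (t + s) p = Ω t (Ω s p)
  zero : ∀ p : P, Ω 0 p = p

/-- The `t`-shift `I(t)` of a subset of a poset with an `ℝ`-flow. -/
def RFlow.shiftSet (Φ : RFlow P) (I : Set P) (t : ℝ) : Set P := {p : P | Φ.Ω t p ∈ I}

lemma RFlow.self_le (Φ : RFlow P) {t : ℝ} (ht : 0 ≤ t) (p : P) : p ≤ Φ.Ω t p := by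
  have h := Φ.mono_param ht p
  rwa [Φ.zero] at h

lemma RFlow.self_le_twice (Φ : RFlow P) {t : ℝ} (ht : 0 ≤ t) (p : P) :
    p ≤ Φ.Ω t (Φ.Ω t p) :=
  (Φ.self_le ht p).trans (Φ.self_le ht _)

lemma RFlow.omega_neg_omega (Φ : RFlow P) (t : ℝ) (p : P) : Φ.Ω (-t) (Φ.Ω t p) = p := by
  have h := Φ.add (-t) t p
  rw [neg_add_cancel, Φ.zero] at h
  exact h.symm

lemma RFlow.omega_omega_neg (Φ : RFlow P) (t : ℝ) (p : P) : Φ.Ω t (Φ.Ω (-t) p) = p := by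
  have h := Φ.add t (-t) p
  rw [add_neg_cancel, Φ.zero] at h
  exact h.symm

lemma RFlow.posetConvex_shiftSet (Φ : RFlow P) {I : Set P} (hI : PosetConvex I) (t : ℝ) :
    PosetConvex (Φ.shiftSet I t) := by
  intro p q r hp hq hpr hrq
  exact hI hp hq (Φ.mono t hpr) (Φ.mono t hrq)

lemma RFlow.posetConnected_shiftSet (Φ : RFlow P) {I : Set P} (hI : PosetConnected I) (t : ℝ) :
    PosetConnected (Φ.shiftSet I t) := by
  intro p hp q hq
  have h := hI _ hp _ hq
  have h2 := Relation.ReflTransGen.lift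
    (p := fun a b : P => b ∈ Φ.shiftSet I t ∧ (a ≤ b ∨ b ≤ a)) (fun x : P => Φ.Ω (-t) x)
    (fun a b (hab : b ∈ I ∧ (a ≤ b ∨ b ≤ a)) => ⟨show Φ.Ω t (Φ.Ω (-t) b) ∈ I by rw [Φ.omega_omega_neg]; exact hab.1,
      hab.2.imp (fun h' => Φ.mono (-t) h') (fun h' => Φ.mono (-t) h')⟩) _ _ h
  simpa only [Function.onFun, Φ.omega_neg_omega] using h2

lemma RFlow.isInterval_shiftSet (Φ : RFlow P) {I : Set P} (hI : IsInterval I) (t : ℝ) :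
    IsInterval (Φ.shiftSet I t) :=
  ⟨Φ.posetConvex_shiftSet hI.1 t, Φ.posetConnected_shiftSet hI.2 t⟩

lemma RFlow.shiftSet_nonempty (Φ : RFlow P) {I : Set P} (hI : I.Nonempty) (t : ℝ) :
    (Φ.shiftSet I t).Nonempty := by
  obtain ⟨x, hx⟩ := hI
  exact ⟨Φ.Ω (-t) x, show Φ.Ω t (Φ.Ω (-t) x) ∈ I by rw [Φ.omega_omega_neg]; exact hx⟩

/-! ## Characteristic (interval) persistence modules -/

variable (K : Type) [Field K]

/-- The pointwise value of the characteristic module of `I`, as a submodule of `K`. -/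
noncomputable def charSub (I : Set P) (p : P) : Submodule K K :=
  if p ∈ I then ⊤ else ⊥

lemma charSub_eq_top {I : Set P} {p : P} (hp : p ∈ I) : charSub K I p = ⊤ := if_pos hp

lemma charSub_eq_bot {I : Set P} {p : P} (hp : p ∉ I) : charSub K I p = ⊥ := if_neg hp

lemma charElt_eq_zero {I : Set P} {p : P} (hp : p ∉ I) (x : ↥(charSub K I p)) : x = 0 := by
  exact Subtype.ext ((Submodule.eq_bot_iff _).mp (charSub_eq_bot K hp) (x : K) x.2)

/-- The structure maps of the characteristic module of `I`. -/
noncomputable def charMap (I : Set P) (p q : P) :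
    ↥(charSub K I p) →ₗ[K] ↥(charSub K I q) :=
  if h : p ∈ I ∧ q ∈ I then
    { toFun := fun x => ⟨(x : K), by rw [charSub_eq_top K h.2]; exact Submodule.mem_top⟩
      map_add' := fun x y => rfl
      map_smul' := fun c x => rfl }
  else 0

lemma charMap_id (I : Set P) (p : P) : charMap K I p p = LinearMap.id := by
  by_cases hp : p ∈ I
  · simp only [charMap, dif_pos (And.intro hp hp)]
    rfl
  · ext x
    rw [charElt_eq_zero K hp x]
    simp

lemma charMap_comp {I : Set P} (hI : PosetConvex I) {p q r : P} (hpq : p ≤ q) (hqr : q ≤ r) :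
    (charMap K I q r).comp (charMap K I p q) = charMap K I p r := by
  by_cases hp : p ∈ I
  · by_cases hr : r ∈ I
    · have hq : q ∈ I := hI hp hr hpq hqr
      ext x
      simp only [charMap, dif_pos (And.intro hp hq), dif_pos (And.intro hq hr),
        dif_pos (And.intro hp hr), LinearMap.comp_apply, LinearMap.coe_mk, AddHom.coe_mk]
    · ext x
      exact congrArg Subtype.val
        ((charElt_eq_zero K hr ((charMap K I q r).comp (charMap K I p q) x)).trans
          (charElt_eq_zero K hr (charMap K I p r x)).symm)
  · ext x
    rw [charElt_eq_zero K hp x]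
    simp

/-- The characteristic persistence module `C(I)` of a poset-convex subset `I`. -/
noncomputable def charMod (I : Set P) (hI : PosetConvex I) : P ⥤ ModuleCat K where
  obj p := ModuleCat.of K ↥(charSub K I p)
  map {p q} h := ModuleCat.ofHom (charMap K I p q)
  map_id p := ModuleCat.hom_ext (charMap_id K I p)
  map_comp {p q r} h1 h2 := ModuleCat.hom_ext (charMap_comp K hI (leOfHom h1) (leOfHom h2)).symm

/-- The zero persistence module, realized as the characteristic module of the empty interval. -/
noncomputable def zeroPMod : P ⥤ ModuleCat K :=
  charMod K (∅ : Set P) (fun _ _ _ hp _ _ _ => absurd hp (Set.notMem_empty _))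

/-! ## Barcodes and interval-decomposable modules -/

/-- A barcode over a poset: a multiset of nonempty intervals, encoded as an indexed family. -/
structure Barcode (P : Type) [PartialOrder P] where
  ι : Type
  B : ι → Set P
  interval : ∀ a : ι, IsInterval (B a)
  nonempty : ∀ a : ι, (B a).Nonempty

/-- The interval-decomposable module `⊕_{a} C(B a)` associated to a barcode. -/
noncomputable def bcMod (D : Barcode P) : P ⥤ ModuleCat K where
  obj p := ModuleCat.of K (Π₀ a : D.ι, ↥(charSub K (D.B a) p))
  map {p q} h := ModuleCat.ofHom (DFinsupp.mapRange.linearMap (fun a => charMap K (D.B a) p q))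
  map_id p := by
    apply ModuleCat.hom_ext
    have h : (fun a : D.ι => charMap K (D.B a) p p)
        = fun a : D.ι => (LinearMap.id : ↥(charSub K (D.B a) p) →ₗ[K] ↥(charSub K (D.B a) p)) := by
      funext a; exact charMap_id K (D.B a) p
    show DFinsupp.mapRange.linearMap (fun a => charMap K (D.B a) p p) = LinearMap.id
    rw [h, DFinsupp.mapRange.linearMap_id]
  map_comp {p q r} h1 h2 := by
    apply ModuleCat.hom_ext
    have h : (fun a : D.ι => charMap K (D.B a) p r)
        = fun a : D.ι => (charMap K (D.B a) q r).comp (charMap K (D.B a) p q) := by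
      funext a
      exact (charMap_comp K (D.interval a).1 (leOfHom h1) (leOfHom h2)).symm
    show DFinsupp.mapRange.linearMap (fun a => charMap K (D.B a) p r) = _
    rw [h, DFinsupp.mapRange.linearMap_comp]
    rfl

/-- `M` is interval-decomposable with barcode `D`. -/
def IsDecompositionOf (D : Barcode P) (M : P ⥤ ModuleCat K) : Prop :=
  Nonempty (M ≅ bcMod K D)

/-- The shift of a barcode along a flow. -/
noncomputable def Barcode.shift (D : Barcode P) (Φ : RFlow P) (t : ℝ) : Barcode P where
  ι := D.ι
  B a := Φ.shiftSet (D.B a) t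
  interval a := Φ.isInterval_shiftSet (D.interval a) t
  nonempty a := Φ.shiftSet_nonempty (D.nonempty a) t

/-! ## Shifts of modules, interleavings, distances -/

/-- The shift `M(t)` of a persistence module along a flow. -/
noncomputable def Pshift (Φ : RFlow P) (t : ℝ) (M : P ⥤ ModuleCat K) : P ⥤ ModuleCat K :=
  (Φ.mono t).functor ⋙ M

/-- The ordered pair `(M, N)` is left `ε`-interleaved. -/
noncomputable def LeftInterleaved (Φ : RFlow P) {ε : ℝ} (hε : 0 ≤ ε)
    (M N : P ⥤ ModuleCat K) : Prop :=
  ∃ (f : M ⟶ Pshift K Φ ε N) (g : N ⟶ Pshift K Φ ε M),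
    ∀ p : P, f.app p ≫ g.app (Φ.Ω ε p) = M.map (homOfLE (Φ.self_le_twice hε p))

/-- `M` and `N` are `ε`-interleaved. -/
noncomputable def Interleaved (Φ : RFlow P) {ε : ℝ} (hε : 0 ≤ ε)
    (M N : P ⥤ ModuleCat K) : Prop :=
  ∃ (f : M ⟶ Pshift K Φ ε N) (g : N ⟶ Pshift K Φ ε M),
    (∀ p : P, f.app p ≫ g.app (Φ.Ω ε p) = M.map (homOfLE (Φ.self_le_twice hε p))) ∧
    (∀ p : P, g.app p ≫ f.app (Φ.Ω ε p) = N.map (homOfLE (Φ.self_le_twice hε p)))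

/-- The interleaving distance between two persistence modules. -/
noncomputable def dI (Φ : RFlow P) (M N : P ⥤ ModuleCat K) : ℝ≥0∞ :=
  ⨅ (ε : NNReal) (_ : Interleaved K Φ ε.coe_nonneg M N), (ε : ℝ≥0∞)

/-- An interval `I` is `t`-trivial if the transition morphism `C(I) → C(I(t))` vanishes. -/
noncomputable def IsTrivialIv (Φ : RFlow P) {t : ℝ} (ht : 0 ≤ t)
    (I : Set P) (hI : PosetConvex I) : Prop :=
  ∀ p : P, (charMod K I hI).map (homOfLE (Φ.self_le ht p)) = 0

/-- An `ε`-correspondence between two barcodes. -/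
noncomputable def IsCorrespondence (Φ : RFlow P) {ε : ℝ} (hε : 0 ≤ ε)
    (DM DN : Barcode P) (σ : Set (DM.ι × DN.ι)) : Prop :=
  (∀ ab ∈ σ, Interleaved K Φ hε
      (charMod K (DM.B ab.1) (DM.interval ab.1).1) (charMod K (DN.B ab.2) (DN.interval ab.2).1)) ∧
  (∀ a : DM.ι, (∀ b : DN.ι, (a, b) ∉ σ) →
      Interleaved K Φ hε (charMod K (DM.B a) (DM.interval a).1) (zeroPMod K)) ∧
  (∀ b : DN.ι, (∀ a : DM.ι, (a, b) ∉ σ) →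
      Interleaved K Φ hε (zeroPMod K) (charMod K (DN.B b) (DN.interval b).1))

/-- An `ε`-matching between two barcodes. -/
noncomputable def IsMatching (Φ : RFlow P) {ε : ℝ} (hε : 0 ≤ ε)
    (DM DN : Barcode P) (σ : Set (DM.ι × DN.ι)) : Prop :=
  IsCorrespondence K Φ hε DM DN σ ∧
  (∀ a b b', (a, b) ∈ σ → (a, b') ∈ σ → b = b') ∧
  (∀ a a' b, (a, b) ∈ σ → (a', b) ∈ σ → a = a')

/-- The Hausdorff distance between (modules with) barcodes `DM`, `DN`. -/
noncomputable def dH (Φ : RFlow P) (DM DN : Barcode P) : ℝ≥0∞ :=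
  ⨅ (ε : NNReal) (_ : ∃ σ : Set (DM.ι × DN.ι), IsCorrespondence K Φ ε.coe_nonneg DM DN σ),
    (ε : ℝ≥0∞)

/-- The bottleneck distance between (modules with) barcodes `DM`, `DN`. -/
noncomputable def dB (Φ : RFlow P) (DM DN : Barcode P) : ℝ≥0∞ :=
  ⨅ (ε : NNReal) (_ : ∃ σ : Set (DM.ι × DN.ι), IsMatching K Φ ε.coe_nonneg DM DN σ),
    (ε : ℝ≥0∞)


/-- The underlying scalar in `K` of an element of a pointwise value of a characteristic
module. -/
def charVal {I : Set P} {p : P} (x : ↥(charSub K I p)) : K := x.val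

/-!
At a point `p ∈ I` a morphism `f : C(I) → C(J)` is determined by the scalar `c p`, the image
of `1`. Naturality along `p ≤ q` with `p, q ∈ I ∩ J` reads `c p = c q`, since both structure
maps are the identity of `K` there; hence `c` is constant along zigzags in `I ∩ J`. Outside
`I ∩ J` the source or the target of `f.app p` is the zero space.
-/

theorem PosetConnected.apply_eq_of_forall_le {α : Type*} {Q : Set P} (hQ : PosetConnected Q)
    {g : P → α} (hg : ∀ ⦃a b⦄, a ∈ Q → b ∈ Q → a ≤ b → g a = g b)
    {p q : P} (hp : p ∈ Q) (hq : q ∈ Q) : g p = g q := by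
  have along_path : ∀ r, Relation.ReflTransGen (fun a b => b ∈ Q ∧ (a ≤ b ∨ b ≤ a)) p r →
      r ∈ Q ∧ g p = g r := by
    intro r hpr
    induction hpr with
    | refl => exact ⟨hp, rfl⟩
    | tail _ hstep ih =>
      refine ⟨hstep.1, ih.2.trans ?_⟩
      rcases hstep.2 with hle | hge
      · exact hg ih.1 hstep.1 hle
      · exact (hg hstep.1 ih.1 hge).symm
  exact (along_path q (hQ p hp q hq)).2

noncomputable def charOne (I : Set P) (p : P) : ↥(charSub K I p) :=
  if h : p ∈ I then ⟨1, by rw [charSub_eq_top K h]; exact Submodule.mem_top⟩ else 0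

lemma charVal_charOne {I : Set P} {p : P} (hp : p ∈ I) : charVal K (charOne K I p) = 1 := by
  simp [charVal, charOne, dif_pos hp]

lemma charVal_smul {I : Set P} {p : P} (c : K) (x : ↥(charSub K I p)) :
    charVal K (c • x) = c * charVal K x :=
  rfl

lemma eq_charVal_smul_charOne {I : Set P} {p : P} (hp : p ∈ I) (x : ↥(charSub K I p)) :
    x = charVal K x • charOne K I p :=
  Subtype.ext <| by
    change charVal K x = charVal K x * charVal K (charOne K I p)
    rw [charVal_charOne K hp, mul_one]

lemma charMap_charOne {I : Set P} {p q : P} (hp : p ∈ I) (hq : q ∈ I) :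
    charMap K I p q (charOne K I p) = charOne K I q := by
  apply Subtype.ext
  simp [charMap, dif_pos (And.intro hp hq), charOne, dif_pos hp, dif_pos hq]

lemma charVal_charMap {I : Set P} {p q : P} (hp : p ∈ I) (hq : q ∈ I)
    (x : ↥(charSub K I p)) : charVal K (charMap K I p q x) = charVal K x := by
  simp [charMap, dif_pos (And.intro hp hq), charVal]

section Morphism

variable {K} {I J : Set P} {hI : PosetConvex I} {hJ : PosetConvex J}

noncomputable def charScalar (f : charMod K I hI ⟶ charMod K J hJ) (p : P) : K :=
  charVal K (f.app p (charOne K I p))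

lemma charVal_app (f : charMod K I hI ⟶ charMod K J hJ) {p : P} (hp : p ∈ I)
    (x : ↥(charSub K I p)) : charVal K (f.app p x) = charVal K x * charScalar f p := by
  conv_lhs => rw [eq_charVal_smul_charOne K hp x]
  exact (congrArg (charVal K) ((f.app p).hom.map_smul _ _)).trans (charVal_smul K _ _)

lemma charScalar_eq_of_le (f : charMod K I hI ⟶ charMod K J hJ) {p q : P}
    (hp : p ∈ I ∩ J) (hq : q ∈ I ∩ J) (hpq : p ≤ q) : charScalar f p = charScalar f q := by
  have naturality : f.app q (charMap K I p q (charOne K I p))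
      = charMap K J p q (f.app p (charOne K I p)) :=
    LinearMap.congr_fun (congrArg ModuleCat.Hom.hom (f.naturality (homOfLE hpq))) _
  rw [charMap_charOne K hp.1 hq.1] at naturality
  exact ((congrArg (charVal K) naturality).trans (charVal_charMap K hp.2 hq.2 _)).symm

lemma app_eq_zero_of_notMem (f : charMod K I hI ⟶ charMod K J hJ) {p : P} (hp : p ∉ I ∩ J) :
    f.app p = 0 := by
  ext x
  by_cases hpI : p ∈ I
  · exact charElt_eq_zero K (fun hpJ => hp ⟨hpI, hpJ⟩) _
  · rw [charElt_eq_zero K hpI x]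
    exact ((f.app p).hom.map_zero).trans (LinearMap.zero_apply _).symm

end Morphism

/-- the components of any morphism of interval modules form a consistent
family: they agree (as scalars) on each poset-connected component of `I ∩ J` and vanish
outside `I ∩ J`. -/
theorem morphism_is_consistent (I J : Set P) (hI : IsInterval I) (hJ : IsInterval J)
    (f : charMod K I hI.1 ⟶ charMod K J hJ.1) :
    (∀ Q : Set P, IsPosetComponent (I ∩ J) Q → ∀ p ∈ Q, ∀ q ∈ Q,
      ∀ (x : ↥(charSub K I p)) (y : ↥(charSub K I q)), charVal K x = charVal K y →
        charVal K (f.app p x) = charVal K (f.app q y)) ∧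
    (∀ p : P, p ∉ I ∩ J → f.app p = 0) := by
  refine ⟨fun Q hQ p hp q hq x y hxy => ?_, fun p hp => app_eq_zero_of_notMem f hp⟩
  have hscalar : charScalar f p = charScalar f q :=
    hQ.2.1.apply_eq_of_forall_le
      (fun a b ha hb hab => charScalar_eq_of_le f (hQ.1 ha) (hQ.1 hb) hab) hp hq
  rw [charVal_app f (hQ.1 hp).1, charVal_app f (hQ.1 hq).1, hxy, hscalar]
end

section
/- Let I, J be intervals in a poset P, let {Q_a}_{a∈A} be the interval components of I ∩ J, and let f = {f_p : C(I)_p → C(J)_p}_{p∈P} be a consistent family of linear maps with associated scalars ω_a(f). Then f defines a morphism of P-modules C(I) → C(J) if and only if every component Q_a with ω_a(f) ≠ 0 is (I,J)-valid. -/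
open CategoryTheory
open scoped Classical ENNReal NNReal

set_option linter.unusedSectionVars false
set_option linter.unusedVariables false

/-! ## Posets, intervals, flows -/

variable {P : Type} [PartialOrder P]

/-! ## Characteristic (interval) persistence modules -/

variable (K : Type) [Field K]

/-! A linear map out of `C(I)_p ≅ K` is determined by the image of `1`, so each naturality
square of `f` at `p ≤ q` is one scalar identity. Inside `I ∩ J` it holds because `p` and `q` lie
in one component, on which `f` is constant. Every other square has a zero side, and it forces the
scalar at the other end to vanish exactly when `p ≤ q` leaves `I` while staying in `J`, or enters
`I ∩ J` from `I \ J`: the two ways a component can fail to be valid. -/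

section Zigzag

/-- `PosetConnected U` unfolds to `ReflTransGen (ZigzagStep U)` between points of `U`. -/
def ZigzagStep (U : Set P) (a b : P) : Prop := b ∈ U ∧ (a ≤ b ∨ b ≤ a)

def zigzagComponent (U : Set P) (p : P) : Set P :=
  {x | Relation.ReflTransGen (ZigzagStep U) p x}

lemma mem_zigzagComponent_self (U : Set P) (p : P) : p ∈ zigzagComponent U p :=
  Relation.ReflTransGen.refl

lemma mem_zigzagComponent_of_le {U : Set P} {p q : P} (hq : q ∈ U) (hpq : p ≤ q) :
    q ∈ zigzagComponent U p :=
  Relation.ReflTransGen.single ⟨hq, Or.inl hpq⟩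

lemma zigzagComponent_subset {U : Set P} {p : P} (hp : p ∈ U) : zigzagComponent U p ⊆ U := by
  intro x hx
  induction hx with
  | refl => exact hp
  | tail _ hstep _ => exact hstep.1

lemma zigzag_reverse {U : Set P} {x y : P} (hx : x ∈ U)
    (h : Relation.ReflTransGen (ZigzagStep U) x y) :
    Relation.ReflTransGen (ZigzagStep U) y x := by
  induction h with
  | refl => exact Relation.ReflTransGen.refl
  | @tail b c hxb hbc ih =>
    exact Relation.ReflTransGen.head ⟨zigzagComponent_subset hx hxb, hbc.2.symm⟩ ih

lemma zigzag_within_zigzagComponent {U : Set P} {p x y : P} (hx : x ∈ zigzagComponent U p)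
    (h : Relation.ReflTransGen (ZigzagStep U) x y) :
    Relation.ReflTransGen (ZigzagStep (zigzagComponent U p)) x y := by
  induction h with
  | refl => exact Relation.ReflTransGen.refl
  | tail hxb hbc ih => exact ih.tail ⟨hx.trans (hxb.tail hbc), hbc.2⟩

lemma posetConnected_zigzagComponent (U : Set P) (p : P) :
    PosetConnected (zigzagComponent U p) := by
  intro x hx y hy
  have hself := mem_zigzagComponent_self U p
  exact (zigzag_reverse hself (zigzag_within_zigzagComponent hself hx)).trans
    (zigzag_within_zigzagComponent hself hy)

lemma isPosetComponent_zigzagComponent {U : Set P} {p : P} (hp : p ∈ U) :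
    IsPosetComponent U (zigzagComponent U p) := by
  refine ⟨zigzagComponent_subset hp, posetConnected_zigzagComponent U p, ?_⟩
  intro Q hQU hQ hsub
  refine Set.Subset.antisymm (fun y hy => ?_) hsub
  have hpQ : p ∈ Q := hsub (mem_zigzagComponent_self U p)
  exact Relation.ReflTransGen.mono (p := ZigzagStep U) (fun _ _ hstep => ⟨hQU hstep.1, hstep.2⟩)
    _ _ (hQ p hpQ y hy)

end Zigzag

section CharModule

noncomputable def charUnit {I : Set P} {p : P} (hp : p ∈ I) : charSub K I p :=
  ⟨1, by rw [charSub_eq_top K hp]; exact Submodule.mem_top⟩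

lemma eq_smul_charUnit {I : Set P} {p : P} (hp : p ∈ I) (x : charSub K I p) :
    x = (x : K) • charUnit K hp :=
  Subtype.ext (by simp [charUnit])

lemma charSub_hom_ext {M : Type*} [AddCommGroup M] [Module K M] {I : Set P} {p : P} (hp : p ∈ I)
    {g h : charSub K I p →ₗ[K] M} (H : g (charUnit K hp) = h (charUnit K hp)) : g = h := by
  ext x
  rw [eq_smul_charUnit K hp x, map_smul, map_smul, H]

lemma coe_charMap_apply {I : Set P} {p q : P} (hp : p ∈ I) (hq : q ∈ I) (x : charSub K I p) :
    (charMap K I p q x : K) = x := by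
  simp only [charMap, dif_pos (And.intro hp hq), LinearMap.coe_mk, AddHom.coe_mk]

lemma charMap_charUnit {I : Set P} {p q : P} (hp : p ∈ I) (hq : q ∈ I) :
    charMap K I p q (charUnit K hp) = charUnit K hq :=
  Subtype.ext (coe_charMap_apply K hp hq _)

lemma charMap_eq_zero_of_notMem {I : Set P} {p q : P} (hq : q ∉ I) : charMap K I p q = 0 :=
  dif_neg fun h => hq h.2

end CharModule

section ConsistentFamily

variable {I J : Set P}

def IsConsistentFamily (f : ∀ p : P, charSub K I p →ₗ[K] charSub K J p) : Prop :=
  (∀ Q : Set P, IsPosetComponent (I ∩ J) Q → ∀ p ∈ Q, ∀ q ∈ Q,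
      ∀ (x : charSub K I p) (y : charSub K I q), (x : K) = (y : K) →
        (f p x : K) = (f q y : K)) ∧
    ∀ p : P, p ∉ I ∩ J → f p = 0

variable {K} {f : ∀ p : P, charSub K I p →ₗ[K] charSub K J p}

lemma IsConsistentFamily.isValid_of_comp_charMap_eq (hf : IsConsistentFamily K f)
    (hnat : ∀ p q : P, p ≤ q → (f q).comp (charMap K I p q) = (charMap K J p q).comp (f p))
    {Q : Set P} (hQ : IsPosetComponent (I ∩ J) Q) (hne : ∃ p ∈ Q, f p ≠ 0) :
    IsValid I J Q := by
  obtain ⟨p₀, hp₀, hfp₀⟩ := hne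
  intro p hp
  obtain ⟨hpI, hpJ⟩ := hQ.1 hp
  have hunit : (f p (charUnit K hpI) : K) ≠ 0 := by
    have hp₀I := (hQ.1 hp₀).1
    rw [hf.1 Q hQ p hp p₀ hp₀ _ (charUnit K hp₀I) rfl]
    exact fun h => hfp₀ (charSub_hom_ext K hp₀I (Subtype.ext h))
  constructor
  · intro q hqI hqp
    by_contra hqJ
    have hsq := LinearMap.congr_fun (hnat q p hqp) (charUnit K hqI)
    rw [LinearMap.comp_apply, LinearMap.comp_apply, charMap_charUnit K hqI hpI,
      hf.2 q fun h => hqJ h.2] at hsq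
    simp [hsq] at hunit
  · intro r hrJ hpr
    by_contra hrI
    have hsq := congrArg Subtype.val (LinearMap.congr_fun (hnat p r hpr) (charUnit K hpI))
    rw [LinearMap.comp_apply, LinearMap.comp_apply, charMap_eq_zero_of_notMem K hrI,
      coe_charMap_apply K hpJ hrJ] at hsq
    simp [← hsq] at hunit

lemma IsConsistentFamily.comp_charMap_eq (hf : IsConsistentFamily K f)
    (hvalid : ∀ Q : Set P, IsPosetComponent (I ∩ J) Q → (∃ p ∈ Q, f p ≠ 0) → IsValid I J Q)
    {p q : P} (hpq : p ≤ q) :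
    (f q).comp (charMap K I p q) = (charMap K J p q).comp (f p) := by
  have hvalid_at : ∀ {r}, r ∈ I ∩ J → f r ≠ 0 →
      (∀ q ∈ I, q ≤ r → q ∈ J) ∧ (∀ s ∈ J, r ≤ s → s ∈ I) := fun hr hfr =>
    hvalid _ (isPosetComponent_zigzagComponent hr) ⟨_, mem_zigzagComponent_self _ _, hfr⟩ _
      (mem_zigzagComponent_self _ _)
  by_cases hpI : p ∈ I
  swap
  · ext x
    simp [charElt_eq_zero K hpI x]
  refine charSub_hom_ext K hpI (Subtype.ext ?_)
  simp only [LinearMap.comp_apply]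
  by_cases hqI : q ∈ I
  · rw [charMap_charUnit K hpI hqI]
    by_cases hpJ : p ∈ J
    · by_cases hqJ : q ∈ J
      · rw [coe_charMap_apply K hpJ hqJ]
        exact hf.1 _ (isPosetComponent_zigzagComponent ⟨hpI, hpJ⟩) q
          (mem_zigzagComponent_of_le ⟨hqI, hqJ⟩ hpq) p (mem_zigzagComponent_self _ _) _ _ rfl
      · simp [hf.2 q fun h => hqJ h.2, charMap_eq_zero_of_notMem K hqJ]
    · have hfq : f q = 0 := by
        by_contra hfq
        by_cases hqJ : q ∈ J
        · exact hpJ ((hvalid_at ⟨hqI, hqJ⟩ hfq).1 p hpI hpq)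
        · exact hfq (hf.2 q fun h => hqJ h.2)
      simp [hfq, hf.2 p fun h => hpJ h.2]
  · rw [charMap_eq_zero_of_notMem K hqI]
    by_cases hqJ : q ∈ J
    · have hfp : f p = 0 := by
        by_contra hfp
        by_cases hpJ : p ∈ J
        · exact hqI ((hvalid_at ⟨hpI, hpJ⟩ hfp).2 q hqJ hpq)
        · exact hfp (hf.2 p fun h => hpJ h.2)
      simp [hfp]
    · simp [charMap_eq_zero_of_notMem K hqJ]

end ConsistentFamily

theorem consistent_family_is_morphism_iff (I J : Set P)
    (f : ∀ p : P, ↥(charSub K I p) →ₗ[K] ↥(charSub K J p))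
    (hconst : ∀ Q : Set P, IsPosetComponent (I ∩ J) Q → ∀ p ∈ Q, ∀ q ∈ Q,
      ∀ (x : ↥(charSub K I p)) (y : ↥(charSub K I q)), (x : K) = (y : K) →
        ((f p x : K) = (f q y : K)))
    (hzero : ∀ p : P, p ∉ I ∩ J → f p = 0) :
    (∀ p q : P, p ≤ q →
        (f q).comp (charMap K I p q) = (charMap K J p q).comp (f p)) ↔
    (∀ Q : Set P, IsPosetComponent (I ∩ J) Q → (∃ p ∈ Q, f p ≠ 0) → IsValid I J Q) := by
  have hf : IsConsistentFamily K f := ⟨hconst, hzero⟩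
  exact ⟨fun hnat _ => hf.isValid_of_comp_charMap_eq hnat,
    fun hvalid _ _ => hf.comp_charMap_eq hvalid⟩
end

section
/- The Hausdorff distance between interval-decomposable modules over ℝ² is not Lipschitz-stable with respect to the interleaving distance: for every real constant c > 0 there exist interval-decomposable ℝ²-modules M and N (with M a direct sum of two interval modules and N a single interval module) such that d_I(M, N) ≤ 1 and d_H(M, N) ≥ c. -/
open CategoryTheory
open scoped Classical ENNReal NNReal

set_option linter.unusedSectionVars false
set_option linter.unusedVariables false

/-! ## Posets, intervals, flows -/

variable {P : Type} [PartialOrder P]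

/-! ## Characteristic (interval) persistence modules -/

variable (K : Type) [Field K]

/-- The standard flow on `ℝⁿ`, by diagonal shifts. -/
noncomputable def stdFlow (n : ℕ) : RFlow (Fin n → ℝ) where
  Ω t x := x + t • (1 : Fin n → ℝ)
  mono t := fun x y h => add_le_add h le_rfl
  mono_param {t s} hts p := by
    intro i
    simp only [Pi.add_apply, Pi.smul_apply, Pi.one_apply, smul_eq_mul, mul_one]
    linarith
  add t s p := by
    funext i
    simp only [Pi.add_apply, Pi.smul_apply, Pi.one_apply, smul_eq_mul, mul_one]
    ring
  zero p := by
    funext i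
    simp

/-! Let `A = [0,L]²` and `B = [L,2L] × [-L,0]`, two squares touching at the corner `(L,0)`.
For `t > 0` no point of one square lies above the `t`-shift of a point of the other. Hence the maps
`C(A) ⊕ C(B) → C(A ∪ B)(t)` and `C(A ∪ B) → (C(A) ⊕ C(B))(t)` whose components are all identities
(where both stalks are nonzero) are natural, and they compose to the transition morphisms: the two
modules are `t`-interleaved for every `t > 0`. But if `2ε < L`, then `C(A ∪ B)` is `ε`-interleaved
neither with `0`, nor with `C(A)`, nor with `C(B)`: in each case some point of `A ∪ B` survives
a `2ε`-shift inside `A ∪ B` while its `ε`-shift misses the partner bar. With `L = 2c` this gives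
`d_H ≥ c`. -/

section Intervals

variable {A B : Set P}

lemma Set.OrdConnected.posetConvex (h : A.OrdConnected) : PosetConvex A :=
  fun _ _ _ hp hq hpr hrq => h.out hp hq ⟨hpr, hrq⟩

lemma DirectedOn.posetConnected (h : DirectedOn (· ≤ ·) A) : PosetConnected A := by
  intro p hp q hq
  obtain ⟨r, hr, hpr, hqr⟩ := h p hp q hq
  exact .head ⟨hr, .inl hpr⟩ (.single ⟨hq, .inr hqr⟩)

lemma isInterval_Icc (a b : P) : IsInterval (Set.Icc a b) :=
  ⟨Set.ordConnected_Icc.posetConvex, (directedOn_le_Icc a b).posetConnected⟩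

lemma PosetConnected.union (hA : PosetConnected A) (hB : PosetConnected B)
    (hAB : (A ∩ B).Nonempty) : PosetConnected (A ∪ B) := by
  obtain ⟨c, hcA, hcB⟩ := hAB
  have lift : ∀ {C : Set P}, C ⊆ A ∪ B → ∀ {p q : P},
      Relation.ReflTransGen (fun a b => b ∈ C ∧ (a ≤ b ∨ b ≤ a)) p q →
      Relation.ReflTransGen (fun a b => b ∈ A ∪ B ∧ (a ≤ b ∨ b ≤ a)) p q :=
    fun hC => Relation.ReflTransGen.mono (fun _ _ h => ⟨hC h.1, h.2⟩) _ _
  have via_c : ∀ p ∈ A ∪ B,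
      Relation.ReflTransGen (fun a b => b ∈ A ∪ B ∧ (a ≤ b ∨ b ≤ a)) p c ∧
      Relation.ReflTransGen (fun a b => b ∈ A ∪ B ∧ (a ≤ b ∨ b ≤ a)) c p := by
    rintro p (hp | hp)
    · exact ⟨lift Set.subset_union_left (hA p hp c hcA), lift Set.subset_union_left (hA c hcA p hp)⟩
    · exact ⟨lift Set.subset_union_right (hB p hp c hcB),
        lift Set.subset_union_right (hB c hcB p hp)⟩
  exact fun p hp q hq => (via_c p hp).1.trans (via_c q hq).2

end Intervals

section CrossMap

variable {I J I' : Set P} {p q r : P}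

noncomputable def crossMap (I J : Set P) (p q : P) : ↥(charSub K I p) →ₗ[K] ↥(charSub K J q) :=
  if h : p ∈ I ∧ q ∈ J then
    { toFun := fun x => ⟨(x : K), by rw [charSub_eq_top K h.2]; exact Submodule.mem_top⟩
      map_add' := fun _ _ => rfl
      map_smul' := fun _ _ => rfl }
  else 0

lemma charMap_eq_crossMap (I : Set P) (p q : P) : charMap K I p q = crossMap K I I p q := rfl

lemma coe_crossMap (x : ↥(charSub K I p)) :
    (crossMap K I J p q x : K) = if p ∈ I ∧ q ∈ J then (x : K) else 0 := by
  unfold crossMap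
  split_ifs <;> rfl

lemma crossMap_eq_zero (h : ¬(p ∈ I ∧ q ∈ J)) : crossMap K I J p q = 0 :=
  dif_neg h

lemma crossMap_crossMap (x : ↥(charSub K I p)) :
    crossMap K J I' q r (crossMap K I J p q x) = if q ∈ J then crossMap K I I' p r x else 0 := by
  by_cases hp : p ∈ I
  · apply Subtype.ext
    split_ifs with hq <;> simp [coe_crossMap, hp, hq]
  · rw [charElt_eq_zero K hp x]
    simp

end CrossMap

section Incidence

variable (Φ : RFlow P) (t : ℝ)

/-- The condition under which the maps `crossMap K I J p (Φ.Ω t p)` form a morphism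
`C(I) ⟶ C(J)(t)`. -/
def CrossNatural (I J : Set P) : Prop :=
  ∀ ⦃p q : P⦄, p ≤ q → p ∈ I → Φ.Ω t q ∈ J → (q ∈ I ↔ Φ.Ω t p ∈ J)

lemma CrossNatural.crossMap_charMap {Φ t} {I J : Set P} (h : CrossNatural Φ t I J)
    {p q : P} (hpq : p ≤ q) (x : ↥(charSub K I p)) :
    crossMap K I J q (Φ.Ω t q) (charMap K I p q x)
      = charMap K J (Φ.Ω t p) (Φ.Ω t q) (crossMap K I J p (Φ.Ω t p) x) := by
  rw [charMap_eq_crossMap, charMap_eq_crossMap, crossMap_crossMap, crossMap_crossMap]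
  by_cases hends : p ∈ I ∧ Φ.Ω t q ∈ J
  · rw [h hpq hends.1 hends.2]
  · simp only [crossMap_eq_zero K hends, LinearMap.zero_apply, ite_self]

/-- Along every path `p ≤ Ω_t p ≤ Ω_{2t} p` with both ends in a bar `A a`, the midpoint lies in
exactly one bar `B b`; no path from one bar `A a` to another `A a'` passes through any `B b`. -/
def RoutesThrough {ι ι' : Type} (A : ι → Set P) (B : ι' → Set P) : Prop :=
  (∀ a p, p ∈ A a → Φ.Ω t (Φ.Ω t p) ∈ A a → ∃! b, Φ.Ω t p ∈ B b) ∧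
  (∀ a a' b p, p ∈ A a → Φ.Ω t p ∈ B b → Φ.Ω t (Φ.Ω t p) ∈ A a' → a = a')

variable (D D' : Barcode P) [Fintype D'.ι]

noncomputable def incidenceMap (p q : P) :
    (Π₀ a, ↥(charSub K (D.B a) p)) →ₗ[K] Π₀ b, ↥(charSub K (D'.B b) q) :=
  DFinsupp.lsum ℕ fun a => ∑ b, (DFinsupp.lsingle b).comp (crossMap K (D.B a) (D'.B b) p q)

lemma incidenceMap_single {p q : P} (a : D.ι) (x : ↥(charSub K (D.B a) p)) :
    incidenceMap K D D' p q (DFinsupp.single a x)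
      = ∑ b, DFinsupp.single b (crossMap K (D.B a) (D'.B b) p q x) := by
  simp [incidenceMap]

variable {Φ t D D'}

lemma incidenceMap_comp_mapRange (h : ∀ a b, CrossNatural Φ t (D.B a) (D'.B b)) {p q : P}
    (hpq : p ≤ q) :
    (incidenceMap K D D' q (Φ.Ω t q)).comp
        (DFinsupp.mapRange.linearMap fun a => charMap K (D.B a) p q)
      = (DFinsupp.mapRange.linearMap fun b => charMap K (D'.B b) (Φ.Ω t p) (Φ.Ω t q)).comp
        (incidenceMap K D D' p (Φ.Ω t p)) := by
  refine DFinsupp.lhom_ext fun a x => ?_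
  simp only [LinearMap.comp_apply, DFinsupp.mapRange.linearMap_apply, DFinsupp.mapRange_single,
    incidenceMap_single, map_sum]
  refine Finset.sum_congr rfl fun b _ => ?_
  exact congrArg _ ((h a b).crossMap_charMap K hpq x)

noncomputable def incidenceHom (h : ∀ a b, CrossNatural Φ t (D.B a) (D'.B b)) :
    bcMod K D ⟶ Pshift K Φ t (bcMod K D') where
  app p := ModuleCat.ofHom (incidenceMap K D D' p (Φ.Ω t p))
  naturality _ _ hpq := ModuleCat.hom_ext (incidenceMap_comp_mapRange K h (leOfHom hpq))

lemma incidenceMap_comp_incidenceMap [Fintype D.ι] (hD : RoutesThrough Φ t D.B D'.B) (p : P) :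
    (incidenceMap K D' D (Φ.Ω t p) (Φ.Ω t (Φ.Ω t p))).comp (incidenceMap K D D' p (Φ.Ω t p))
      = DFinsupp.mapRange.linearMap fun a => charMap K (D.B a) p (Φ.Ω t (Φ.Ω t p)) := by
  refine DFinsupp.lhom_ext fun a x => ?_
  simp only [LinearMap.comp_apply, incidenceMap_single, map_sum, crossMap_crossMap,
    DFinsupp.mapRange.linearMap_apply, DFinsupp.mapRange_single]
  rw [Finset.sum_comm, Finset.sum_eq_single a]
  · by_cases hends : p ∈ D.B a ∧ Φ.Ω t (Φ.Ω t p) ∈ D.B a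
    · obtain ⟨b, hb, hb_unique⟩ := hD.1 a p hends.1 hends.2
      rw [Finset.sum_eq_single b (fun b' _ hb' => by rw [if_neg (mt (hb_unique b') hb'),
        DFinsupp.single_zero]) (by simp), if_pos hb, charMap_eq_crossMap]
    · simp only [charMap_eq_crossMap, crossMap_eq_zero K hends, LinearMap.zero_apply, ite_self,
        DFinsupp.single_zero, Finset.sum_const_zero]
  · intro a' _ ha'
    refine Finset.sum_eq_zero fun b _ => ?_
    split_ifs with hb
    · rw [crossMap_eq_zero K fun hends => ha' (hD.2 a a' b p hends.1 hb hends.2).symm,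
        LinearMap.zero_apply, DFinsupp.single_zero]
    · exact DFinsupp.single_zero _
  · simp

theorem interleaved_of_routesThrough [Fintype D.ι] (ht : 0 ≤ t)
    (hDD' : ∀ a b, CrossNatural Φ t (D.B a) (D'.B b))
    (hD'D : ∀ b a, CrossNatural Φ t (D'.B b) (D.B a))
    (hD : RoutesThrough Φ t D.B D'.B) (hD' : RoutesThrough Φ t D'.B D.B) :
    Interleaved K Φ ht (bcMod K D) (bcMod K D') :=
  ⟨incidenceHom K hDD', incidenceHom K hD'D,
    fun p => ModuleCat.hom_ext (incidenceMap_comp_incidenceMap K hD p),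
    fun p => ModuleCat.hom_ext (incidenceMap_comp_incidenceMap K hD' p)⟩

end Incidence

lemma dI_le_of_interleaved {Φ : RFlow P} {M N : P ⥤ ModuleCat K} {ε : ℝ≥0}
    (h : Interleaved K Φ ε.coe_nonneg M N) : dI K Φ M N ≤ ε :=
  iInf₂_le ε h

section Union

variable {Φ : RFlow P} {t : ℝ} {A B : Set P} {p : P}

def FlowSeparated (Φ : RFlow P) (t : ℝ) (A B : Set P) : Prop :=
  ∀ ⦃p r : P⦄, p ∈ A → Φ.Ω t p ≤ r → r ∉ B

lemma PosetConvex.flow_mem (hA : PosetConvex A) (ht : 0 ≤ t) (hp : p ∈ A)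
    (hp2 : Φ.Ω t (Φ.Ω t p) ∈ A) : Φ.Ω t p ∈ A :=
  hA hp hp2 (Φ.self_le ht p) (Φ.self_le ht _)

lemma crossNatural_union_right (ht : 0 ≤ t) (hA : PosetConvex A) (hAB : FlowSeparated Φ t A B) :
    CrossNatural Φ t A (A ∪ B) := by
  intro p q hpq hp hq
  have hqA : Φ.Ω t q ∈ A := hq.resolve_right (hAB hp (Φ.mono t hpq))
  exact iff_of_true (hA hp hqA hpq (Φ.self_le ht q))
    (Or.inl (hA hp hqA (Φ.self_le ht p) (Φ.mono t hpq)))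

lemma crossNatural_union_left (ht : 0 ≤ t) (hA : PosetConvex A) (hBA : FlowSeparated Φ t B A) :
    CrossNatural Φ t (A ∪ B) A := by
  intro p q hpq hp hq
  have hpA : p ∈ A := hp.resolve_right fun hpB => hBA hpB (Φ.mono t hpq) hq
  exact iff_of_true (Or.inl (hA hpA hq hpq (Φ.self_le ht q)))
    (hA hpA hq (Φ.self_le ht p) (Φ.mono t hpq))

lemma flow_mem_of_mem_union (ht : 0 ≤ t) (hA : PosetConvex A) (hAB : FlowSeparated Φ t A B)
    (hp : p ∈ A) (hp2 : Φ.Ω t (Φ.Ω t p) ∈ A ∪ B) : Φ.Ω t p ∈ A ∧ Φ.Ω t p ∉ B :=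
  ⟨hA.flow_mem ht hp (hp2.resolve_right (hAB hp (Φ.self_le ht _))), hAB hp le_rfl⟩

abbrev Barcode.pair (A B : Set P) (hA : IsInterval A) (hB : IsInterval B) (hA' : A.Nonempty)
    (hB' : B.Nonempty) : Barcode P where
  ι := Fin 2
  B := ![A, B]
  interval := Fin.forall_fin_two.2 ⟨hA, hB⟩
  nonempty := Fin.forall_fin_two.2 ⟨hA', hB'⟩

abbrev Barcode.single (A : Set P) (hA : IsInterval A) (hA' : A.Nonempty) : Barcode P where
  ι := Fin 1
  B _ := A
  interval _ := hA
  nonempty _ := hA'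

lemma routesThrough_pair_union (ht : 0 ≤ t) (hA : PosetConvex A) (hB : PosetConvex B)
    (hsepAB : FlowSeparated Φ t A B) (hsepBA : FlowSeparated Φ t B A) :
    RoutesThrough Φ t ![A, B] fun _ : Fin 1 => A ∪ B := by
  refine ⟨fun a p hp hp2 => ⟨0, ?_, fun _ _ => Subsingleton.elim _ _⟩, fun a a' _ p hp _ hp2 => ?_⟩
  · fin_cases a
    · exact .inl (hA.flow_mem ht hp hp2)
    · exact .inr (hB.flow_mem ht hp hp2)
  · fin_cases a <;> fin_cases a'
    · rfl
    · exact absurd hp2 (hsepAB hp (Φ.self_le ht _))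
    · exact absurd hp2 (hsepBA hp (Φ.self_le ht _))
    · rfl

lemma routesThrough_union_pair (ht : 0 ≤ t) (hA : PosetConvex A) (hB : PosetConvex B)
    (hsepAB : FlowSeparated Φ t A B) (hsepBA : FlowSeparated Φ t B A) :
    RoutesThrough Φ t (fun _ : Fin 1 => A ∪ B) ![A, B] := by
  refine ⟨fun _ p hp hp2 => ?_, fun _ _ _ _ _ _ _ => Subsingleton.elim _ _⟩
  rcases hp with hpA | hpB
  · obtain ⟨hmidA, hmidB⟩ := flow_mem_of_mem_union ht hA hsepAB hpA hp2
    refine ⟨0, hmidA, fun a ha => ?_⟩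
    fin_cases a
    · rfl
    · exact absurd ha hmidB
  · obtain ⟨hmidB, hmidA⟩ := flow_mem_of_mem_union ht hB hsepBA hpB (Set.union_comm A B ▸ hp2)
    refine ⟨1, hmidB, fun a ha => ?_⟩
    fin_cases a
    · exact absurd ha hmidA
    · rfl

theorem interleaved_pair_union (ht : 0 ≤ t) (hA : IsInterval A) (hB : IsInterval B)
    (hAB : IsInterval (A ∪ B)) (hA' : A.Nonempty) (hB' : B.Nonempty)
    (hsepAB : FlowSeparated Φ t A B) (hsepBA : FlowSeparated Φ t B A) :
    Interleaved K Φ ht (bcMod K (Barcode.pair A B hA hB hA' hB'))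
      (bcMod K (Barcode.single (A ∪ B) hAB (hA'.mono Set.subset_union_left))) :=
  interleaved_of_routesThrough K ht
    (Fin.forall_fin_two.2 ⟨fun _ => crossNatural_union_right ht hA.1 hsepAB,
      fun _ => (Set.union_comm B A ▸ crossNatural_union_right ht hB.1 hsepBA :
        CrossNatural Φ t B (A ∪ B))⟩)
    (fun _ => Fin.forall_fin_two.2 ⟨crossNatural_union_left ht hA.1 hsepBA,
      (Set.union_comm B A ▸ crossNatural_union_left ht hB.1 hsepAB :
        CrossNatural Φ t (A ∪ B) B)⟩)
    (routesThrough_pair_union ht hA.1 hB.1 hsepAB hsepBA)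
    (routesThrough_union_pair ht hA.1 hB.1 hsepAB hsepBA)

end Union

section NotInterleaved

variable {Φ : RFlow P} {ε : ℝ} {hε : 0 ≤ ε}

lemma Interleaved.flow_mem {I J : Set P} {hI : PosetConvex I} {hJ : PosetConvex J}
    (h : Interleaved K Φ hε (charMod K I hI) (charMod K J hJ)) {q : P} (hq : q ∈ J)
    (hq2 : Φ.Ω ε (Φ.Ω ε q) ∈ J) : Φ.Ω ε q ∈ I := by
  by_contra hmid
  obtain ⟨f, g, -, hgf⟩ := h
  let x : ↥(charSub K J q) := ⟨1, by rw [charSub_eq_top K hq]; trivial⟩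
  have hgf_q : (f.app (Φ.Ω ε q)).hom ∘ₗ (g.app q).hom = charMap K J q (Φ.Ω ε (Φ.Ω ε q)) :=
    congrArg ModuleCat.Hom.hom (hgf q)
  have hg : (g.app q).hom x = 0 := charElt_eq_zero K hmid _
  have hx : charMap K J q (Φ.Ω ε (Φ.Ω ε q)) x = 0 :=
    (LinearMap.congr_fun hgf_q x).symm.trans ((congrArg (f.app _).hom hg).trans (map_zero _))
  have hval := congrArg Subtype.val hx
  rw [charMap_eq_crossMap, coe_crossMap, if_pos ⟨hq, hq2⟩] at hval
  exact one_ne_zero hval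

lemma IsCorrespondence.interleaved_of_bar {DM DN : Barcode P} {σ : Set (DM.ι × DN.ι)}
    (h : IsCorrespondence K Φ hε DM DN σ) (b : DN.ι) :
    Interleaved K Φ hε (zeroPMod K) (charMod K (DN.B b) (DN.interval b).1) ∨
      ∃ a, Interleaved K Φ hε (charMod K (DM.B a) (DM.interval a).1)
        (charMod K (DN.B b) (DN.interval b).1) := by
  by_cases hb : ∃ a, (a, b) ∈ σ
  · obtain ⟨a, hab⟩ := hb
    exact .inr ⟨a, h.1 _ hab⟩
  · exact .inl (h.2.2 b fun a hab => hb ⟨a, hab⟩)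

end NotInterleaved

section Squares

variable {L t : ℝ}

lemma stdFlow_apply (n : ℕ) (t : ℝ) (x : Fin n → ℝ) (i : Fin n) :
    (stdFlow n).Ω t x i = x i + t := by
  simp [stdFlow]

def nwSquare (L : ℝ) : Set (Fin 2 → ℝ) := Set.Icc ![0, 0] ![L, L]

def seSquare (L : ℝ) : Set (Fin 2 → ℝ) := Set.Icc ![L, -L] ![2 * L, 0]

lemma mem_nwSquare {p : Fin 2 → ℝ} :
    p ∈ nwSquare L ↔ (0 ≤ p 0 ∧ p 0 ≤ L) ∧ 0 ≤ p 1 ∧ p 1 ≤ L := by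
  simp [nwSquare, Pi.le_def, Fin.forall_fin_two, and_and_and_comm]

lemma mem_seSquare {p : Fin 2 → ℝ} :
    p ∈ seSquare L ↔ (L ≤ p 0 ∧ p 0 ≤ 2 * L) ∧ -L ≤ p 1 ∧ p 1 ≤ 0 := by
  simp [seSquare, Pi.le_def, Fin.forall_fin_two, and_and_and_comm]

lemma corner_mem_nwSquare_inter_seSquare (hL : 0 ≤ L) : ![L, 0] ∈ nwSquare L ∩ seSquare L := by
  simp only [Set.mem_inter_iff, mem_nwSquare, mem_seSquare, Matrix.cons_val_zero,
    Matrix.cons_val_one]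
  exact ⟨⟨⟨hL, le_rfl⟩, le_rfl, hL⟩, ⟨le_rfl, by linarith⟩, by linarith, le_rfl⟩

lemma posetConvex_nwSquare_union_seSquare : PosetConvex (nwSquare L ∪ seSquare L) := by
  intro p q r hp hq hpr hrq
  have := hpr 0; have := hpr 1; have := hrq 0; have := hrq 1
  simp only [Set.mem_union, mem_nwSquare, mem_seSquare] at hp hq ⊢
  rcases hp with hp | hp <;> rcases hq with hq | hq
  · exact .inl ⟨⟨by linarith, by linarith⟩, by linarith, by linarith⟩
  · by_cases h : r 0 ≤ L
    · exact .inl ⟨⟨by linarith, h⟩, by linarith, by linarith⟩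
    · exact .inr ⟨⟨by linarith, by linarith⟩, by linarith, by linarith⟩
  · by_cases h : r 1 ≤ 0
    · exact .inr ⟨⟨by linarith, by linarith⟩, by linarith, h⟩
    · exact .inl ⟨⟨by linarith, by linarith⟩, by linarith, by linarith⟩
  · exact .inr ⟨⟨by linarith, by linarith⟩, by linarith, by linarith⟩

lemma isInterval_nwSquare_union_seSquare (hL : 0 ≤ L) :
    IsInterval (nwSquare L ∪ seSquare L) :=
  ⟨posetConvex_nwSquare_union_seSquare, (isInterval_Icc _ _).2.union (isInterval_Icc _ _).2
    ⟨_, corner_mem_nwSquare_inter_seSquare hL⟩⟩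

lemma flowSeparated_nwSquare_seSquare (ht : 0 < t) :
    FlowSeparated (stdFlow 2) t (nwSquare L) (seSquare L) := by
  intro p r hp hpr hr
  have := hpr 1
  rw [stdFlow_apply] at this
  linarith [(mem_nwSquare.1 hp).2.1, (mem_seSquare.1 hr).2.2]

lemma flowSeparated_seSquare_nwSquare (ht : 0 < t) :
    FlowSeparated (stdFlow 2) t (seSquare L) (nwSquare L) := by
  intro p r hp hpr hr
  have := hpr 0
  rw [stdFlow_apply] at this
  linarith [(mem_seSquare.1 hp).1.1, (mem_nwSquare.1 hr).1.2]

abbrev twoSquares (L : ℝ) (hL : 0 ≤ L) : Barcode (Fin 2 → ℝ) :=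
  Barcode.pair (nwSquare L) (seSquare L) (isInterval_Icc _ _) (isInterval_Icc _ _)
    ⟨_, (corner_mem_nwSquare_inter_seSquare hL).1⟩ ⟨_, (corner_mem_nwSquare_inter_seSquare hL).2⟩

abbrev joinedSquares (L : ℝ) (hL : 0 ≤ L) : Barcode (Fin 2 → ℝ) :=
  Barcode.single (nwSquare L ∪ seSquare L) (isInterval_nwSquare_union_seSquare hL)
    ⟨_, .inl (corner_mem_nwSquare_inter_seSquare hL).1⟩

theorem interleaved_twoSquares_joinedSquares (hL : 0 ≤ L) (ht : 0 < t) :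
    Interleaved K (stdFlow 2) ht.le (bcMod K (twoSquares L hL)) (bcMod K (joinedSquares L hL)) :=
  interleaved_pair_union K ht.le _ _ _ _ _ (flowSeparated_nwSquare_seSquare ht)
    (flowSeparated_seSquare_nwSquare ht)

lemma le_two_mul_of_isCorrespondence (hL : 0 ≤ L) {ε : ℝ} (hε : 0 ≤ ε)
    {σ : Set ((twoSquares L hL).ι × (joinedSquares L hL).ι)}
    (hσ : IsCorrespondence K (stdFlow 2) hε (twoSquares L hL) (joinedSquares L hL) σ) :
    L ≤ 2 * ε := by
  by_contra! hlt
  set Ω := (stdFlow 2).Ω ε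
  have origin : 0 ∈ nwSquare L ∧ Ω (Ω 0) ∈ nwSquare L ∧ Ω 0 ∉ seSquare L := by
    simp only [mem_nwSquare, mem_seSquare, Ω, stdFlow_apply, Pi.zero_apply, zero_add, not_and]
    exact ⟨⟨⟨le_rfl, hL⟩, le_rfl, hL⟩, ⟨⟨by linarith, by linarith⟩, by linarith, by linarith⟩,
      fun h => by linarith [h.1]⟩
  have corner : ![L, -L] ∈ seSquare L ∧ Ω (Ω ![L, -L]) ∈ seSquare L ∧ Ω ![L, -L] ∉ nwSquare L := by
    simp only [mem_nwSquare, mem_seSquare, Ω, stdFlow_apply, Matrix.cons_val_zero,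
      Matrix.cons_val_one, not_and]
    exact ⟨⟨⟨le_rfl, by linarith⟩, le_rfl, by linarith⟩,
      ⟨⟨by linarith, by linarith⟩, by linarith, by linarith⟩, fun _ _ => by linarith⟩
  rcases hσ.interleaved_of_bar K 0 with h | ⟨a, h⟩
  · exact h.flow_mem K (.inl origin.1) (.inl origin.2.1)
  · fin_cases a
    · exact corner.2.2 (h.flow_mem K (.inr corner.1) (.inr corner.2.1))
    · exact origin.2.2 (h.flow_mem K (.inl origin.1) (.inl origin.2.1))

lemma ofReal_half_le_dH (hL : 0 ≤ L) :
    ENNReal.ofReal (L / 2) ≤ dH K (stdFlow 2) (twoSquares L hL) (joinedSquares L hL) :=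
  le_iInf₂ fun ε ⟨_, hσ⟩ => (ENNReal.ofReal_le_ofReal
    (by linarith [le_two_mul_of_isCorrespondence K hL _ hσ])).trans_eq ENNReal.ofReal_coe_nnreal

end Squares

/-- instability of the Hausdorff distance with respect to the
interleaving distance for interval-decomposable `ℝ²`-modules. -/
theorem hausdorff_instability (c : ℝ) (hc : 0 < c) :
    ∃ DM DN : Barcode (Fin 2 → ℝ),
      Nonempty (DM.ι ≃ Fin 2) ∧ Nonempty (DN.ι ≃ Fin 1) ∧
      dI K (stdFlow 2) (bcMod K DM) (bcMod K DN) ≤ 1 ∧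
      ENNReal.ofReal c ≤ dH K (stdFlow 2) DM DN := by
  have hL : 0 ≤ 2 * c := by positivity
  refine ⟨twoSquares (2 * c) hL, joinedSquares (2 * c) hL, ⟨Equiv.refl _⟩, ⟨Equiv.refl _⟩, ?_, ?_⟩
  · simpa using dI_le_of_interleaved K (ε := 1) (interleaved_twoSquares_joinedSquares K hL one_pos)
  · simpa using ofReal_half_le_dH K hL
end
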